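/- arXiv:2403.14109 — 7 statements merged into one kernel-verified Lean document; each statement's English description precedes it below -/
import Mathlib

section
/- Let (X_i)_{i≥1} be i.i.d. real random variables with partial sums S_0 = 0, S_n = X_1 + ... + X_n, and suppose there exists υ₀ > 0 with E[exp(υ₀ X_1)] = 1. Then for every b ≥ 0, P( ∃ n ≥ 1 such that S_n ≥ b ) ≤ exp(−υ₀ b). -/
open MeasureTheory ProbabilityTheory Finset Real
open scoped ENNReal NNReal

/-! Because `E[exp (υ₀ X₁)] = 1`, the process `exp (υ₀ S (n + 1))` is a nonnegative martingale
with mean `1` for the natural filtration of `X`. Ville's maximal inequality for nonnegative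
martingales bounds the probability that it ever reaches `exp (υ₀ b)` by `exp (-υ₀ b)`, and this
is the event that `S n ≥ b` for some `n ≥ 1`. -/

namespace MeasureTheory

variable {Ω : Type*} {m0 : MeasurableSpace Ω} {μ : Measure Ω} [IsFiniteMeasure μ]
  {𝒢 : Filtration ℕ m0} {f : ℕ → Ω → ℝ}

theorem Martingale.integral_eq_integral_zero (hf : Martingale f 𝒢 μ) (n : ℕ) :
    ∫ ω, f n ω ∂μ = ∫ ω, f 0 ω ∂μ := by
  simpa using (hf.setIntegral_eq (Nat.zero_le n) MeasurableSet.univ).symm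

theorem Martingale.ville_ineq (hf : Martingale f 𝒢 μ) (hnonneg : 0 ≤ f)
    (ε : ℝ≥0) : ε * μ {ω | ∃ n, (ε : ℝ) ≤ f n ω} ≤ ENNReal.ofReal (∫ ω, f 0 ω ∂μ) := by
  set A : ℕ → Set Ω := fun N =>
    {ω | (ε : ℝ) ≤ (range (N + 1)).sup' nonempty_range_add_one fun k => f k ω}
  have hA_mono : Monotone A := fun N M hNM ω (hω : (ε : ℝ) ≤ _) =>
    hω.trans (sup'_mono _ (range_subset_range.2 (by omega)) _)
  have h_sub : {ω | ∃ n, (ε : ℝ) ≤ f n ω} ⊆ ⋃ N, A N := fun ω ⟨n, hn⟩ =>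
    Set.mem_iUnion.2 ⟨n, hn.trans (le_sup' (fun k => f k ω) (self_mem_range_succ n))⟩
  have h_bound N : ε * μ (A N) ≤ ENNReal.ofReal (∫ ω, f 0 ω ∂μ) := calc
    _ ≤ ENNReal.ofReal (∫ ω in A N, f N ω ∂μ) := maximal_ineq hf.submartingale hnonneg N
    _ ≤ ENNReal.ofReal (∫ ω, f N ω ∂μ) := ENNReal.ofReal_le_ofReal <|
        setIntegral_le_integral (hf.integrable N) (.of_forall (hnonneg N))
    _ = ENNReal.ofReal (∫ ω, f 0 ω ∂μ) := by rw [hf.integral_eq_integral_zero]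
  calc _ ≤ ε * μ (⋃ N, A N) := by gcongr
    _ = ⨆ N, ε * μ (A N) := by rw [hA_mono.measure_iUnion, ENNReal.mul_iSup]
    _ ≤ _ := iSup_le h_bound

end MeasureTheory

namespace ProbabilityTheory

variable {Ω : Type*} {m0 : MeasurableSpace Ω} {μ : Measure Ω} {X : ℕ → Ω → ℝ}

theorem iIndepFun.indep_comap_succ_natural (hX : iIndepFun X μ) (hmeas : ∀ i, Measurable (X i))
    (n : ℕ) :
    Indep (MeasurableSpace.comap (X (n + 1)) inferInstance)
      (Filtration.natural X (fun i => (hmeas i).stronglyMeasurable) n) μ := by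
  simpa [Filtration.natural] using indep_iSup_of_disjoint (fun i => (hmeas i).comap_le) hX
    (S := {n + 1}) (T := Set.Iic n) (by simp)

theorem iIndepFun.martingale_exp_mul_sum {t : ℝ} [IsProbabilityMeasure μ] (hX : iIndepFun X μ)
    (hmeas : ∀ i, Measurable (X i)) (hmgf : ∀ i, mgf (X i) μ t = 1) :
    Martingale (fun n ω => exp (t * ∑ i ∈ range (n + 1), X i ω))
      (Filtration.natural X fun i => (hmeas i).stronglyMeasurable) μ := by
  set ℱ := Filtration.natural X fun i => (hmeas i).stronglyMeasurable
  have h_mgf_sum n : mgf (∑ i ∈ range n, X i) μ t = 1 := by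
    rw [hX.mgf_sum hmeas]
    exact prod_eq_one fun i _ => hmgf i
  have h_int n : Integrable (fun ω => exp (t * ∑ i ∈ range n, X i ω)) μ := by
    refine .of_integral_ne_zero ?_
    simpa [mgf, Finset.sum_apply] using (h_mgf_sum n).trans_ne one_ne_zero
  have h_int_step n : Integrable (fun ω => exp (t * X n ω)) μ :=
    .of_integral_ne_zero <| (hmgf n).trans_ne one_ne_zero
  have h_adapted : StronglyAdapted ℱ fun n ω => exp (t * ∑ i ∈ range (n + 1), X i ω) := by
    intro n
    have h_sum : Measurable[ℱ n] fun ω => ∑ i ∈ range (n + 1), X i ω :=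
      Finset.measurable_sum _ fun i hi =>
        ((Filtration.stronglyAdapted_natural _ i).mono
          (ℱ.mono (Nat.lt_succ_iff.1 (mem_range.1 hi)))).measurable
    exact (h_sum.const_mul t).exp.stronglyMeasurable
  refine martingale_nat h_adapted (fun n => h_int (n + 1)) fun n => ?_
  have h_split : (fun ω => exp (t * ∑ i ∈ range (n + 1 + 1), X i ω)) =
      (fun ω => exp (t * ∑ i ∈ range (n + 1), X i ω)) * fun ω => exp (t * X (n + 1) ω) := by
    ext ω
    simp [sum_range_succ _ (n + 1), mul_add, exp_add]
  have h_step : μ[fun ω => exp (t * X (n + 1) ω) | ℱ n] =ᵐ[μ] fun _ => 1 := by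
    have h := condExp_indep_eq (hmeas (n + 1)).comap_le (ℱ.le n)
      ((measurable_iff_comap_le.2 le_rfl).const_mul t).exp.stronglyMeasurable
      (hX.indep_comap_succ_natural hmeas n)
    have h_mean : ∫ ω, exp (t * X (n + 1) ω) ∂μ = 1 := hmgf (n + 1)
    rwa [h_mean] at h
  rw [h_split]
  filter_upwards [condExp_mul_of_stronglyMeasurable_left (h_adapted n) (h_split ▸ h_int (n + 2))
    (h_int_step (n + 1)), h_step] with ω h_pull h_one
  simp [h_pull, h_one]

end ProbabilityTheory

theorem lundberg_bound_general
    {Ω : Type*} [MeasurableSpace Ω] (μ : Measure Ω) [IsProbabilityMeasure μ]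
    (X : ℕ → Ω → ℝ)
    (hmeas : ∀ i, Measurable (X i))
    (hindep : iIndepFun X μ)
    (hident : ∀ i, μ.map (X i) = μ.map (X 0))
    (υ₀ : ℝ) (hυ₀ : 0 < υ₀)
    (hmgf : ∫ ω, Real.exp (υ₀ * X 0 ω) ∂μ = 1)
    (S : ℕ → Ω → ℝ)
    (hS : ∀ n ω, S n ω = ∑ i ∈ Finset.range n, X i ω)
    (b : ℝ) :
    μ {ω | ∃ n, 1 ≤ n ∧ b ≤ S n ω} ≤ ENNReal.ofReal (Real.exp (-υ₀ * b)) := by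
  have h_mgf i : mgf (X i) μ υ₀ = 1 := by
    rw [mgf_congr_identDistrib ⟨(hmeas i).aemeasurable, (hmeas 0).aemeasurable, hident i⟩]
    exact hmgf
  have h_mart := hindep.martingale_exp_mul_sum hmeas h_mgf
  set ε : ℝ≥0 := ⟨exp (υ₀ * b), (exp_pos _).le⟩
  have h_sub : {ω | ∃ n, 1 ≤ n ∧ b ≤ S n ω} ⊆
      {ω | ∃ n, (ε : ℝ) ≤ exp (υ₀ * ∑ i ∈ range (n + 1), X i ω)} := by
    rintro ω ⟨_ | n, hn, hb⟩
    · cases hn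
    · exact ⟨n, exp_le_exp.2 (by rw [← hS]; gcongr)⟩
  have h_ville := h_mart.ville_ineq (fun n ω => (exp_pos _).le) ε
  have h_zero : ∫ ω, exp (υ₀ * ∑ i ∈ range (0 + 1), X i ω) ∂μ = 1 := by simpa using hmgf
  rw [h_zero, ENNReal.ofReal_one] at h_ville
  calc μ {ω | ∃ n, 1 ≤ n ∧ b ≤ S n ω} ≤ (ε : ℝ≥0∞)⁻¹ :=
        ENNReal.le_inv_iff_mul_le.2 <| by
          rw [mul_comm]
          exact le_trans (by gcongr) h_ville
    _ = ENNReal.ofReal (exp (-υ₀ * b)) := by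
        rw [neg_mul, exp_neg, ENNReal.ofReal_inv_of_pos (exp_pos _), ← ENNReal.ofReal_coe_nnreal]
        rfl

/-- Lundberg-type bound: if `E[exp(υ₀ X₁)] = 1` for some `υ₀ > 0`, then the
probability that the random walk `S n = X 1 + ⋯ + X n` ever reaches level
`b ≥ 0` is at most `exp(−υ₀ b)`. -/
theorem lundberg_bound
    {Ω : Type*} [MeasurableSpace Ω] (μ : Measure Ω) [IsProbabilityMeasure μ]
    (X : ℕ → Ω → ℝ)
    (hmeas : ∀ i, Measurable (X i))
    (hindep : iIndepFun X μ)
    (hident : ∀ i, μ.map (X i) = μ.map (X 0))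
    (υ₀ : ℝ) (hυ₀ : 0 < υ₀)
    (hmgf : ∫ ω, Real.exp (υ₀ * X 0 ω) ∂μ = 1)
    (S : ℕ → Ω → ℝ)
    (hS : ∀ n ω, S n ω = ∑ i ∈ Finset.range n, X i ω)
    (b : ℝ) (hb : 0 ≤ b) :
    μ {ω | ∃ n, 1 ≤ n ∧ b ≤ S n ω} ≤ ENNReal.ofReal (Real.exp (-υ₀ * b)) :=
  lundberg_bound_general μ X hmeas hindep hident υ₀ hυ₀ hmgf S hS b
end

section
/- Let (X_i)_{i≥1} be i.i.d. real random variables with E[exp(υ₀ X_1)] = 1 for some υ₀ > 0, and let W be the CUSUM statistic: W_0 = 0, W_{n+1} = max(0, W_n + X_{n+1}). Then for every n ≥ 0 and every b ≥ 0, P(W_n ≥ b) ≤ exp(−υ₀ b). -/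
open MeasureTheory ProbabilityTheory

/-!
The bound is proved for every real `b`, by induction on `n`; for `b ≤ 0` it is trivial since
`υ₀ ≥ 0`. As `W n` is a function of `X 0, …, X (n-1)`, it is independent of `X n`, so conditioning
on `X n` gives `P(W n + X n ≥ b) ≤ E[exp(-υ₀ (b - X n))] = exp(-υ₀ b) E[exp(υ₀ X n)] = exp(-υ₀ b)`;
and for `b > 0` the events `W (n+1) ≥ b` and `W n + X n ≥ b` coincide.
-/

section Independence

variable {Ω ι β γ : Type*} [MeasurableSpace Ω] {μ : Measure Ω} [MeasurableSpace β]
  [MeasurableSpace γ]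

theorem ProbabilityTheory.iIndepFun.indepFun_of_measurable_iSup {X : ι → Ω → β}
    (hX : ∀ i, Measurable (X i)) (hindep : iIndepFun X μ) {S : Set ι} {j : ι} (hj : j ∉ S)
    {V : Ω → γ} (hV : Measurable[⨆ i ∈ S, MeasurableSpace.comap (X i) ‹_›] V) :
    IndepFun V (X j) μ := by
  have h := indep_iSup_of_disjoint (fun i ↦ (hX i).comap_le) hindep.iIndep
    (Set.disjoint_singleton_right.mpr hj)
  rw [iSup_singleton] at h
  exact (IndepFun_iff_Indep _ _ _).mpr (indep_of_indep_of_le_left h hV.comap_le)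

end Independence

section TailBound

variable {Ω : Type*} [MeasurableSpace Ω] {μ : Measure Ω} {υ : ℝ}

theorem one_le_ofReal_exp_neg_mul {b : ℝ} (hυ : 0 ≤ υ) (hb : b ≤ 0) :
    1 ≤ ENNReal.ofReal (Real.exp (-υ * b)) := by
  rw [← ENNReal.ofReal_one]
  exact ENNReal.ofReal_le_ofReal (Real.one_le_exp (by nlinarith))

theorem measure_le_add_le_exp_mul_lintegral_exp [IsFiniteMeasure μ] {Y Z : Ω → ℝ}
    (hY : Measurable Y) (hZ : Measurable Z) (hYZ : IndepFun Y Z μ)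
    (hY_tail : ∀ c, μ {ω | c ≤ Y ω} ≤ ENNReal.ofReal (Real.exp (-υ * c))) (b : ℝ) :
    μ {ω | b ≤ Y ω + Z ω} ≤
      ENNReal.ofReal (Real.exp (-υ * b)) * ∫⁻ ω, ENNReal.ofReal (Real.exp (υ * Z ω)) ∂μ := by
  have hexp : Measurable fun z : ℝ ↦ ENNReal.ofReal (Real.exp (υ * z)) := by fun_prop
  calc μ {ω | b ≤ Y ω + Z ω} = (μ.map Z ∗ μ.map Y) (Set.Ici b) := by
        rw [← hYZ.symm.map_add_eq_map_conv_map hZ hY, Measure.map_apply (hZ.add hY)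
          measurableSet_Ici]
        simp only [Set.preimage, Set.mem_Ici, Pi.add_apply, add_comm]
    _ = ∫⁻ z, μ.map Y (Set.Ici (b - z)) ∂μ.map Z := by
        rw [← lintegral_indicator_one measurableSet_Ici, Measure.lintegral_conv
          (measurable_one.indicator measurableSet_Ici)]
        refine lintegral_congr fun z ↦ ?_
        rw [← lintegral_indicator_one measurableSet_Ici]
        congr with y
        simp only [Set.indicator, Set.mem_Ici, sub_le_iff_le_add, add_comm, Pi.one_apply]
    _ ≤ ∫⁻ z, ENNReal.ofReal (Real.exp (-υ * b)) * ENNReal.ofReal (Real.exp (υ * z))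
          ∂μ.map Z := by
        refine lintegral_mono fun z ↦ ?_
        rw [Measure.map_apply hY measurableSet_Ici, ← ENNReal.ofReal_mul (Real.exp_pos _).le,
          ← Real.exp_add]
        exact (hY_tail (b - z)).trans_eq (by ring_nf)
    _ = _ := by rw [lintegral_const_mul _ hexp, lintegral_map hexp hZ]

theorem measure_le_max_zero_le_exp [IsProbabilityMeasure μ] (hυ : 0 ≤ υ) {V : Ω → ℝ}
    (hV_tail : ∀ b, 0 < b → μ {ω | b ≤ V ω} ≤ ENNReal.ofReal (Real.exp (-υ * b))) (b : ℝ) :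
    μ {ω | b ≤ max 0 (V ω)} ≤ ENNReal.ofReal (Real.exp (-υ * b)) := by
  rcases le_or_gt b 0 with hb | hb
  · exact prob_le_one.trans (one_le_ofReal_exp_neg_mul hυ hb)
  · simpa only [le_max_iff, hb.not_ge, false_or] using hV_tail b hb

end TailBound

section Cusum

variable {Ω : Type*} {X W : ℕ → Ω → ℝ}

theorem measurable_cusum_iSup_comap (hW0 : ∀ ω, W 0 ω = 0)
    (hW : ∀ n ω, W (n + 1) ω = max 0 (W n ω + X n ω)) (n : ℕ) :
    Measurable[⨆ i ∈ Set.Iio n, MeasurableSpace.comap (X i) inferInstance] (W n) := by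
  induction n with
  | zero => simp only [funext hW0, measurable_const]
  | succ n ih =>
    rw [funext (hW n)]
    have hmono : (⨆ i ∈ Set.Iio n, MeasurableSpace.comap (X i) inferInstance) ≤
        ⨆ i ∈ Set.Iio (n + 1), MeasurableSpace.comap (X i) inferInstance :=
      biSup_mono fun i hi ↦ Nat.lt_succ_of_lt hi
    have hXn : Measurable[⨆ i ∈ Set.Iio (n + 1), MeasurableSpace.comap (X i) inferInstance]
        (X n) :=
      (comap_measurable (X n)).mono (le_iSup₂_of_le n (Nat.lt_succ_self n) le_rfl) le_rfl
    exact measurable_const.max ((ih.mono hmono le_rfl).add hXn)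

variable [MeasurableSpace Ω] {μ : Measure Ω}

theorem cusum_tail_le_exp [IsProbabilityMeasure μ] (hX : ∀ i, Measurable (X i))
    (hindep : iIndepFun X μ) {υ : ℝ} (hυ : 0 ≤ υ)
    (hmgf : ∀ i, ∫⁻ ω, ENNReal.ofReal (Real.exp (υ * X i ω)) ∂μ ≤ 1)
    (hW0 : ∀ ω, W 0 ω = 0) (hW : ∀ n ω, W (n + 1) ω = max 0 (W n ω + X n ω)) (n : ℕ) (b : ℝ) :
    μ {ω | b ≤ W n ω} ≤ ENNReal.ofReal (Real.exp (-υ * b)) := by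
  induction n generalizing b with
  | zero =>
    rcases le_or_gt b 0 with hb | hb
    · exact prob_le_one.trans (one_le_ofReal_exp_neg_mul hυ hb)
    · simp [hW0, hb.not_ge]
  | succ n ih =>
    have hWn := measurable_cusum_iSup_comap hW0 hW n
    simp only [hW]
    refine measure_le_max_zero_le_exp hυ (fun c _ ↦ ?_) b
    calc μ {ω | c ≤ W n ω + X n ω}
        ≤ ENNReal.ofReal (Real.exp (-υ * c)) * ∫⁻ ω, ENNReal.ofReal (Real.exp (υ * X n ω)) ∂μ :=
          measure_le_add_le_exp_mul_lintegral_exp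
            (hWn.mono (iSup₂_le fun i _ ↦ (hX i).comap_le) le_rfl) (hX n)
            (hindep.indepFun_of_measurable_iSup hX Set.self_notMem_Iio hWn) ih c
      _ ≤ ENNReal.ofReal (Real.exp (-υ * c)) := mul_le_of_le_one_right' (hmgf n)

end Cusum

theorem cusum_tail_bound_general
    {Ω : Type*} [MeasurableSpace Ω] (μ : Measure Ω) [IsProbabilityMeasure μ]
    (X : ℕ → Ω → ℝ)
    (hmeas : ∀ i, Measurable (X i))
    (hindep : iIndepFun X μ)
    (hident : ∀ i, μ.map (X i) = μ.map (X 0))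
    (υ₀ : ℝ) (hυ₀ : 0 < υ₀)
    (hmgf : ∫ ω, Real.exp (υ₀ * X 0 ω) ∂μ = 1)
    (W : ℕ → Ω → ℝ)
    (hW0 : ∀ ω, W 0 ω = 0)
    (hW : ∀ n ω, W (n + 1) ω = max 0 (W n ω + X n ω))
    (n : ℕ) (b : ℝ) :
    μ {ω | b ≤ W n ω} ≤ ENNReal.ofReal (Real.exp (-υ₀ * b)) := by
  have hexp : Measurable fun x : ℝ ↦ ENNReal.ofReal (Real.exp (υ₀ * x)) := by fun_prop
  have hint : Integrable (fun ω ↦ Real.exp (υ₀ * X 0 ω)) μ :=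
    .of_integral_ne_zero (by rw [hmgf]; exact one_ne_zero)
  have hmgf_eq (i : ℕ) : ∫⁻ ω, ENNReal.ofReal (Real.exp (υ₀ * X i ω)) ∂μ = 1 := by
    rw [← lintegral_map hexp (hmeas i), hident i, lintegral_map hexp (hmeas 0),
      ← ofReal_integral_eq_lintegral_ofReal hint (ae_of_all _ fun _ ↦ (Real.exp_pos _).le), hmgf,
      ENNReal.ofReal_one]
  exact cusum_tail_le_exp hmeas hindep hυ₀.le (fun i ↦ (hmgf_eq i).le) hW0 hW n b

/-- Uniform-in-time exponential tail bound for the CUSUM statistic: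
if `E[exp(υ₀ X₁)] = 1` for some `υ₀ > 0` and `W` is the CUSUM recursion
`W 0 = 0`, `W (n+1) = max(0, W n + X (n+1))`, then `P(W n ≥ b) ≤ exp(−υ₀ b)`
for every `n ≥ 0` and every `b ≥ 0`. -/
theorem cusum_tail_bound
    {Ω : Type*} [MeasurableSpace Ω] (μ : Measure Ω) [IsProbabilityMeasure μ]
    (X : ℕ → Ω → ℝ)
    (hmeas : ∀ i, Measurable (X i))
    (hindep : iIndepFun X μ)
    (hident : ∀ i, μ.map (X i) = μ.map (X 0))
    (υ₀ : ℝ) (hυ₀ : 0 < υ₀)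
    (hmgf : ∫ ω, Real.exp (υ₀ * X 0 ω) ∂μ = 1)
    (W : ℕ → Ω → ℝ)
    (hW0 : ∀ ω, W 0 ω = 0)
    (hW : ∀ n ω, W (n + 1) ω = max 0 (W n ω + X n ω))
    (n : ℕ) (b : ℝ) (hb : 0 ≤ b) :
    μ {ω | b ≤ W n ω} ≤ ENNReal.ofReal (Real.exp (-υ₀ * b)) :=
  cusum_tail_bound_general μ X hmeas hindep hident υ₀ hυ₀ hmgf W hW0 hW n b
end

section
/- Let (X_i)_{i≥1} be i.i.d. real random variables with log moment generating function Λ(υ) = log E[exp(υ X_1)], and let S_0 = 0, S_n = X_1 + ... + X_n. Let τ be an ℕ-valued random variable independent of the sequence (X_i), and suppose there are constants C ≥ 0 and ρ > 0 with P(τ ≥ n) ≤ C exp(−ρ n) for all n ≥ 1. If υ > 0 satisfies Λ(υ) < ρ (in particular Λ(υ) finite), then for every b > 0, P( ∃ k with 1 ≤ k < τ and S_k ≥ b ) ≤ C exp(−υ b) / (1 − exp(Λ(υ) − ρ)). -/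
open MeasureTheory ProbabilityTheory Finset Real

/-!
Split the premature-crossing event according to the crossing time `k`. Since the walk is
independent of `τ`, the event `{S k ≥ b, k < τ}` has probability `P(S k ≥ b) P(τ ≥ k + 1)`;
the Chernoff bound gives `P(S k ≥ b) ≤ exp(-υ b) exp(k Λυ)` and the tail assumption gives
`P(τ ≥ k + 1) ≤ C exp(-ρ k)`. The resulting bounds `C exp(-υ b) exp(Λυ - ρ)^k` form a geometric
series whose ratio is `< 1` exactly because `Λυ < ρ`.
-/

section

variable {Ω : Type*} [MeasurableSpace Ω] {μ : Measure Ω}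

theorem measure_iUnion_le_ofReal_geometric {A : ℕ → Set Ω} {c r : ℝ} (hc : 0 ≤ c)
    (hr₀ : 0 ≤ r) (hr₁ : r < 1) (hA : ∀ k, μ (A k) ≤ ENNReal.ofReal (c * r ^ k)) :
    μ (⋃ k, A k) ≤ ENNReal.ofReal (c / (1 - r)) := by
  have hsum : HasSum (fun k => c * r ^ k) (c / (1 - r)) := by
    simpa [div_eq_mul_inv] using (hasSum_geometric_of_lt_one hr₀ hr₁).mul_left c
  calc μ (⋃ k, A k) ≤ ∑' k, μ (A k) := measure_iUnion_le A
    _ ≤ ∑' k, ENNReal.ofReal (c * r ^ k) := ENNReal.tsum_le_tsum hA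
    _ = ENNReal.ofReal (c / (1 - r)) := by
      rw [← ENNReal.ofReal_tsum_of_nonneg (fun k => by positivity) hsum.summable, hsum.tsum_eq]

variable {X : ℕ → Ω → ℝ}

theorem measureReal_sum_range_ge_le_of_identDistrib [IsFiniteMeasure μ]
    (hmeas : ∀ i, Measurable (X i)) (hindep : iIndepFun X μ)
    (hident : ∀ i, IdentDistrib (X i) (X 0) μ μ) {t : ℝ} (ht : 0 ≤ t)
    (hint : Integrable (fun ω => exp (t * X 0 ω)) μ) (b : ℝ) (k : ℕ) :
    μ.real {ω | b ≤ ∑ i ∈ range k, X i ω} ≤ exp (-t * b) * mgf (X 0) μ t ^ k := by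
  have hint_sum : Integrable (fun ω => exp (t * (∑ i ∈ range k, X i) ω)) μ :=
    hindep.integrable_exp_mul_sum hmeas fun i _ =>
      ((hident i).comp (measurable_const_mul t).exp).integrable_iff.mpr hint
  have hmgf : mgf (∑ i ∈ range k, X i) μ t = mgf (X 0) μ t ^ k := by
    rw [hindep.mgf_sum hmeas, prod_eq_pow_card fun i _ => mgf_congr_of_identDistrib _ _ (hident i) t,
      card_range]
  simpa only [hmgf, Finset.sum_apply] using measure_ge_le_exp_mul_mgf b ht hint_sum

theorem measure_sum_range_ge_and_lt_eq_mul {τ : Ω → ℕ}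
    (hτindep : IndepFun (fun ω i => X i ω) τ μ) (b : ℝ) (k : ℕ) :
    μ {ω | b ≤ ∑ i ∈ range k, X i ω ∧ k < τ ω}
      = μ {ω | b ≤ ∑ i ∈ range k, X i ω} * μ {ω | k < τ ω} := by
  have hE : MeasurableSet {f : ℕ → ℝ | b ≤ ∑ i ∈ range k, f i} :=
    measurableSet_le measurable_const (by fun_prop)
  exact hτindep.measure_inter_preimage_eq_mul _ _ hE (measurableSet_Ioi (a := k))

theorem measure_sum_range_ge_and_lt_le [IsFiniteMeasure μ]
    (hmeas : ∀ i, Measurable (X i)) (hindep : iIndepFun X μ)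
    (hident : ∀ i, IdentDistrib (X i) (X 0) μ μ) {τ : Ω → ℕ}
    (hτindep : IndepFun (fun ω i => X i ω) τ μ) {C ρ : ℝ} (hC : 0 ≤ C) (hρ : 0 ≤ ρ)
    (htail : ∀ n : ℕ, 1 ≤ n → μ {ω | n ≤ τ ω} ≤ ENNReal.ofReal (C * exp (-ρ * n)))
    {υ Λυ : ℝ} (hυ : 0 ≤ υ) (hint : Integrable (fun ω => exp (υ * X 0 ω)) μ)
    (hΛ : mgf (X 0) μ υ = exp Λυ) (b : ℝ) (k : ℕ) :
    μ {ω | b ≤ ∑ i ∈ range k, X i ω ∧ k < τ ω}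
      ≤ ENNReal.ofReal (C * exp (-υ * b) * exp (Λυ - ρ) ^ k) := by
  have hwalk : μ {ω | b ≤ ∑ i ∈ range k, X i ω} ≤ ENNReal.ofReal (exp (-υ * b) * exp Λυ ^ k) := by
    rw [← hΛ, ← ofReal_measureReal]
    exact ENNReal.ofReal_le_ofReal
      (measureReal_sum_range_ge_le_of_identDistrib hmeas hindep hident hυ hint b k)
  have hchange : μ {ω | k < τ ω} ≤ ENNReal.ofReal (C * exp (-ρ * (k + 1))) := by
    have h := htail (k + 1) k.succ_pos
    push_cast at h
    exact h
  have hexp : exp Λυ ^ k * exp (-ρ * (k + 1)) ≤ exp (Λυ - ρ) ^ k := by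
    rw [← exp_nat_mul, ← exp_nat_mul, ← exp_add, exp_le_exp]
    nlinarith
  calc μ {ω | b ≤ ∑ i ∈ range k, X i ω ∧ k < τ ω}
      = μ {ω | b ≤ ∑ i ∈ range k, X i ω} * μ {ω | k < τ ω} :=
        measure_sum_range_ge_and_lt_eq_mul hτindep b k
    _ ≤ ENNReal.ofReal (exp (-υ * b) * exp Λυ ^ k) * ENNReal.ofReal (C * exp (-ρ * (k + 1))) :=
        mul_le_mul' hwalk hchange
    _ = ENNReal.ofReal (C * exp (-υ * b) * (exp Λυ ^ k * exp (-ρ * (k + 1)))) := by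
        rw [← ENNReal.ofReal_mul (by positivity)]
        congr 1
        ring
    _ ≤ ENNReal.ofReal (C * exp (-υ * b) * exp (Λυ - ρ) ^ k) := by
        gcongr

end

theorem eagerness_bound_general
    {Ω : Type*} [MeasurableSpace Ω] (μ : Measure Ω) [IsProbabilityMeasure μ]
    (X : ℕ → Ω → ℝ)
    (hmeas : ∀ i, Measurable (X i))
    (hindep : iIndepFun X μ)
    (hident : ∀ i, μ.map (X i) = μ.map (X 0))
    (S : ℕ → Ω → ℝ)
    (hS : ∀ n ω, S n ω = ∑ i ∈ Finset.range n, X i ω)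
    (τ : Ω → ℕ)
    (hτindep : IndepFun (fun ω => fun i => X i ω) τ μ)
    (C ρ : ℝ) (hC : 0 ≤ C) (hρ : 0 < ρ)
    (htail : ∀ n : ℕ, 1 ≤ n → μ {ω | n ≤ τ ω} ≤ ENNReal.ofReal (C * Real.exp (-ρ * n)))
    (υ Λυ : ℝ) (hυ : 0 < υ)
    (hmgf_int : Integrable (fun ω => Real.exp (υ * X 0 ω)) μ)
    (hΛ : ∫ ω, Real.exp (υ * X 0 ω) ∂μ = Real.exp Λυ)
    (hΛρ : Λυ < ρ)
    (b : ℝ) :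
    μ {ω | ∃ k, 1 ≤ k ∧ k < τ ω ∧ b ≤ S k ω}
      ≤ ENNReal.ofReal (C * Real.exp (-υ * b) / (1 - Real.exp (Λυ - ρ))) := by
  have hidentDistrib : ∀ i, IdentDistrib (X i) (X 0) μ μ :=
    fun i => ⟨(hmeas i).aemeasurable, (hmeas 0).aemeasurable, hident i⟩
  have hcross : {ω | ∃ k, 1 ≤ k ∧ k < τ ω ∧ b ≤ S k ω}
      ⊆ ⋃ k, {ω | b ≤ ∑ i ∈ range k, X i ω ∧ k < τ ω} := by
    rintro ω ⟨k, -, hkτ, hbS⟩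
    exact Set.mem_iUnion.2 ⟨k, hS k ω ▸ hbS, hkτ⟩
  calc μ {ω | ∃ k, 1 ≤ k ∧ k < τ ω ∧ b ≤ S k ω}
      ≤ μ (⋃ k, {ω | b ≤ ∑ i ∈ range k, X i ω ∧ k < τ ω}) := measure_mono hcross
    _ ≤ ENNReal.ofReal (C * exp (-υ * b) / (1 - exp (Λυ - ρ))) :=
      measure_iUnion_le_ofReal_geometric (by positivity) (exp_pos _).le
        (exp_lt_one_iff.2 (by linarith)) fun k =>
          measure_sum_range_ge_and_lt_le hmeas hindep hidentDistrib hτindep hC hρ.le htail hυ.le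
            hmgf_int hΛ b k

/-- Premature-crossing bound.  Let `S n = X 1 + ⋯ + X n` be a random walk with
i.i.d. increments whose log moment generating function at `υ` is `Λυ`,
i.e. `E[exp(υ X₁)] = exp Λυ`, and let `τ` be an ℕ-valued change time,
independent of the increments, with tail `P(τ ≥ n) ≤ C exp(−ρ n)` for `n ≥ 1`.
If `υ > 0` and `Λυ < ρ`, then for every `b > 0`,
`P(∃ k, 1 ≤ k < τ, S k ≥ b) ≤ C exp(−υ b) / (1 − exp(Λυ − ρ))`. -/
theorem eagerness_bound
    {Ω : Type*} [MeasurableSpace Ω] (μ : Measure Ω) [IsProbabilityMeasure μ]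
    (X : ℕ → Ω → ℝ)
    (hmeas : ∀ i, Measurable (X i))
    (hindep : iIndepFun X μ)
    (hident : ∀ i, μ.map (X i) = μ.map (X 0))
    (S : ℕ → Ω → ℝ)
    (hS : ∀ n ω, S n ω = ∑ i ∈ Finset.range n, X i ω)
    (τ : Ω → ℕ) (hτmeas : Measurable τ)
    (hτindep : IndepFun (fun ω => fun i => X i ω) τ μ)
    (C ρ : ℝ) (hC : 0 ≤ C) (hρ : 0 < ρ)
    (htail : ∀ n : ℕ, 1 ≤ n → μ {ω | n ≤ τ ω} ≤ ENNReal.ofReal (C * Real.exp (-ρ * n)))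
    (υ Λυ : ℝ) (hυ : 0 < υ)
    (hmgf_int : Integrable (fun ω => Real.exp (υ * X 0 ω)) μ)
    (hΛ : ∫ ω, Real.exp (υ * X 0 ω) ∂μ = Real.exp Λυ)
    (hΛρ : Λυ < ρ)
    (b : ℝ) (hb : 0 < b) :
    μ {ω | ∃ k, 1 ≤ k ∧ k < τ ω ∧ b ≤ S k ω}
      ≤ ENNReal.ofReal (C * Real.exp (-υ * b) / (1 - Real.exp (Λυ - ρ))) :=
  eagerness_bound_general μ X hmeas hindep hident S hS τ hτindep C ρ hC hρ htail υ Λυ hυ hmgf_int hΛ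
    hΛρ b
end

section
/- Let (X_i)_{i≥1} be i.i.d. integrable real random variables with m₁ := E[X_1] > 0, let W be the CUSUM statistic W_0 = 0, W_{n+1} = max(0, W_n + X_{n+1}), and for b > 0 let T_b = inf{ n ≥ 0 : W_n ≥ b }. Then T_b < ∞ almost surely for every b > 0, and T_b / b → 1/m₁ almost surely as b → ∞. -/
/-!
Writing `S n = ∑_{i<n} X i`, the CUSUM statistic is `W n = S n - min_{k ≤ n} S k`, so
`S n ≤ W n ≤ S n - inf_k S k`. By the strong law `S n / n → m₁ > 0`; hence `S` is bounded below
and `W n / n → m₁` as well. For any sequence `w` with `w n / n → m > 0`, the first passage index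
`τ b` above level `b` satisfies `w (τ b - 1) < b ≤ w (τ b)` and `τ b → ∞`, so `b / τ b → m`.
-/

open MeasureTheory ProbabilityTheory Filter
open Topology Finset

lemma tendsto_atTop_of_tendsto_div_natCast {u : ℕ → ℝ} {m : ℝ} (hm : 0 < m)
    (hu : Tendsto (fun n : ℕ => u n / n) atTop (𝓝 m)) : Tendsto u atTop atTop := by
  refine (tendsto_natCast_atTop_atTop.atTop_mul_pos hm hu).congr' ?_
  filter_upwards [eventually_ne_atTop 0] with n hn
  field_simp

lemma tendsto_pred_div_natCast {u : ℕ → ℝ} {m : ℝ}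
    (hu : Tendsto (fun n : ℕ => u n / n) atTop (𝓝 m)) :
    Tendsto (fun n : ℕ => u (n - 1) / n) atTop (𝓝 m) := by
  rw [← tendsto_add_atTop_iff_nat 1]
  have hlim := hu.mul (tendsto_natCast_div_add_atTop (1 : ℝ))
  rw [mul_one] at hlim
  refine hlim.congr' ?_
  filter_upwards [eventually_ne_atTop 0] with n hn
  push_cast
  field_simp

section Cusum

variable {x w : ℕ → ℝ}

lemma sum_range_le_cusum (hw0 : w 0 = 0) (hw : ∀ n, w (n + 1) = max 0 (w n + x n))
    (n : ℕ) : ∑ i ∈ range n, x i ≤ w n := by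
  induction n with
  | zero => simp [hw0]
  | succ n ih =>
    rw [hw, sum_range_succ]
    exact (add_le_add_left ih _).trans (le_max_right _ _)

lemma cusum_le_sum_range_sub (hw0 : w 0 = 0) (hw : ∀ n, w (n + 1) = max 0 (w n + x n))
    {c : ℝ} (hc : ∀ k, c ≤ ∑ i ∈ range k, x i) (n : ℕ) :
    w n ≤ ∑ i ∈ range n, x i - c := by
  induction n with
  | zero => simpa [hw0] using hc 0
  | succ n ih =>
    rw [hw, sum_range_succ]
    exact max_le (by linarith [hc (n + 1), sum_range_succ x n]) (by linarith)

lemma tendsto_cusum_div_natCast (hw0 : w 0 = 0) (hw : ∀ n, w (n + 1) = max 0 (w n + x n))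
    {m : ℝ} (hm : 0 < m)
    (hx : Tendsto (fun n : ℕ => (∑ i ∈ range n, x i) / n) atTop (𝓝 m)) :
    Tendsto (fun n : ℕ => w n / n) atTop (𝓝 m) := by
  obtain ⟨c, hc⟩ :=
    bddBelow_range_of_tendsto_atTop_atTop (tendsto_atTop_of_tendsto_div_natCast hm hx)
  have hupper : Tendsto (fun n : ℕ => (∑ i ∈ range n, x i) / n - c / n) atTop (𝓝 m) := by
    simpa using hx.sub (tendsto_const_div_atTop_nhds_zero_nat c)
  refine tendsto_of_tendsto_of_tendsto_of_le_of_le hx hupper (fun n => ?_) (fun n => ?_)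
  · exact div_le_div_of_nonneg_right (sum_range_le_cusum hw0 hw n) n.cast_nonneg
  · rw [← sub_div]
    exact div_le_div_of_nonneg_right
      (cusum_le_sum_range_sub hw0 hw (fun k => hc ⟨k, rfl⟩) n) n.cast_nonneg

end Cusum

-- `sInf ∅ = 0`: this is `0` when `w` never reaches `b`.
noncomputable def firstPassage (w : ℕ → ℝ) (b : ℝ) : ℕ := sInf {n | b ≤ w n}

section FirstPassage

variable {w : ℕ → ℝ}

lemma le_apply_firstPassage {b : ℝ} (h : ∃ n, b ≤ w n) : b ≤ w (firstPassage w b) :=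
  Nat.sInf_mem h

lemma apply_lt_of_lt_firstPassage {b : ℝ} {n : ℕ} (h : n < firstPassage w b) : w n < b :=
  not_le.mp (Nat.notMem_of_lt_sInf h)

lemma tendsto_firstPassage_atTop (hw : ∀ b, ∃ n, b ≤ w n) :
    Tendsto (firstPassage w) atTop atTop := by
  refine tendsto_atTop.2 fun N => ?_
  filter_upwards [eventually_gt_atTop (∑ k ∈ range N, |w k|)] with b hb
  by_contra! hlt
  have hreach := le_apply_firstPassage (hw b)
  have hbound : |w (firstPassage w b)| ≤ ∑ k ∈ range N, |w k| :=
    single_le_sum (f := fun k => |w k|) (fun k _ => abs_nonneg _) (mem_range.2 hlt)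
  linarith [le_abs_self (w (firstPassage w b))]

lemma tendsto_div_firstPassage {m : ℝ} (hm : 0 < m)
    (hw : Tendsto (fun n : ℕ => w n / n) atTop (𝓝 m)) :
    Tendsto (fun b => b / firstPassage w b) atTop (𝓝 m) := by
  have hreach : ∀ b, ∃ n, b ≤ w n := fun b =>
    ((tendsto_atTop_of_tendsto_div_natCast hm hw).eventually_ge_atTop b).exists
  have hτ := tendsto_firstPassage_atTop hreach
  refine tendsto_of_tendsto_of_tendsto_of_le_of_le' ((tendsto_pred_div_natCast hw).comp hτ)
    (hw.comp hτ) ?_ (Eventually.of_forall fun b => ?_)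
  · filter_upwards [hτ.eventually_ge_atTop 1] with b hb
    exact div_le_div_of_nonneg_right
      (apply_lt_of_lt_firstPassage (Nat.sub_lt hb one_pos)).le (Nat.cast_nonneg _)
  · exact div_le_div_of_nonneg_right
      (le_apply_firstPassage (hreach b)) (Nat.cast_nonneg _)

lemma tendsto_firstPassage_div {m : ℝ} (hm : 0 < m)
    (hw : Tendsto (fun n : ℕ => w n / n) atTop (𝓝 m)) :
    Tendsto (fun b => (firstPassage w b : ℝ) / b) atTop (𝓝 (1 / m)) := by
  simpa [one_div, inv_div] using (tendsto_div_firstPassage hm hw).inv₀ hm.ne'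

end FirstPassage

theorem cusum_hitting_time_lln_general
    {Ω : Type*} [MeasurableSpace Ω] (μ : Measure Ω)
    (X : ℕ → Ω → ℝ)
    (hmeas : ∀ i, Measurable (X i))
    (hindep : iIndepFun X μ)
    (hident : ∀ i, μ.map (X i) = μ.map (X 0))
    (hint : Integrable (X 0) μ)
    (m₁ : ℝ) (hm₁ : m₁ = ∫ ω, X 0 ω ∂μ) (hm₁pos : 0 < m₁)
    (W : ℕ → Ω → ℝ)
    (hW0 : ∀ ω, W 0 ω = 0)
    (hW : ∀ n ω, W (n + 1) ω = max 0 (W n ω + X n ω))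
    (T : ℝ → Ω → ℕ)
    (hT : ∀ b ω, T b ω = sInf {n : ℕ | b ≤ W n ω}) :
    ∀ᵐ ω ∂μ,
      (∀ b : ℝ, 0 < b → ∃ n, b ≤ W n ω) ∧
      Tendsto (fun b : ℝ => (T b ω : ℝ) / b) atTop (nhds (1 / m₁)) := by
  have hslln := strong_law_ae_real X hint (fun i j hij => hindep.indepFun hij)
    (fun i => ⟨(hmeas i).aemeasurable, (hmeas 0).aemeasurable, hident i⟩)
  filter_upwards [hslln] with ω hS
  rw [← hm₁] at hS
  have hWlim := tendsto_cusum_div_natCast (w := (W · ω)) (hW0 ω) (hW · ω) hm₁pos hS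
  have hTω : ∀ b, T b ω = firstPassage (W · ω) b := fun b => hT b ω
  refine ⟨fun b _ => ?_, ?_⟩
  · exact ((tendsto_atTop_of_tendsto_div_natCast hm₁pos hWlim).eventually_ge_atTop b).exists
  · simpa only [hTω] using tendsto_firstPassage_div hm₁pos hWlim

/-- Law of large numbers for the CUSUM first-passage time.  If the i.i.d.
increments are integrable with positive mean `m₁` and `W` is the CUSUM
recursion `W 0 = 0`, `W (n+1) = max(0, W n + X (n+1))`, then for every
threshold `b > 0` the hitting time `T_b = inf { n : W n ≥ b }` is almost
surely finite, and `T_b / b → 1/m₁` almost surely as `b → ∞`. -/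
theorem cusum_hitting_time_lln
    {Ω : Type*} [MeasurableSpace Ω] (μ : Measure Ω) [IsProbabilityMeasure μ]
    (X : ℕ → Ω → ℝ)
    (hmeas : ∀ i, Measurable (X i))
    (hindep : iIndepFun X μ)
    (hident : ∀ i, μ.map (X i) = μ.map (X 0))
    (hint : Integrable (X 0) μ)
    (m₁ : ℝ) (hm₁ : m₁ = ∫ ω, X 0 ω ∂μ) (hm₁pos : 0 < m₁)
    (W : ℕ → Ω → ℝ)
    (hW0 : ∀ ω, W 0 ω = 0)
    (hW : ∀ n ω, W (n + 1) ω = max 0 (W n ω + X n ω))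
    (T : ℝ → Ω → ℕ)
    (hT : ∀ b ω, T b ω = sInf {n : ℕ | b ≤ W n ω}) :
    ∀ᵐ ω ∂μ,
      (∀ b : ℝ, 0 < b → ∃ n, b ≤ W n ω) ∧
      Tendsto (fun b : ℝ => (T b ω : ℝ) / b) atTop (nhds (1 / m₁)) :=
  cusum_hitting_time_lln_general μ X hmeas hindep hident hint m₁ hm₁ hm₁pos W hW0 hW T hT
end

section
/- Let (X_i)_{i≥1} be i.i.d. real random variables with partial sums S_0 = 0, S_n = X_1 + ... + X_n, and let W be the CUSUM statistic W_0 = 0, W_{n+1} = max(0, W_n + X_{n+1}). Then for every x ∈ ℝ, the sequence n ↦ P(W_n ≤ x) is nonincreasing and converges to P( sup_{k ≥ 0} S_k ≤ x ). If moreover X_1 is integrable with E[X_1] < 0, then sup_{k ≥ 0} S_k is almost surely finite, so W_n converges in distribution to the almost surely finite random variable sup_{k ≥ 0} S_k. -/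
/-
Unrolling the recursion gives `W n = max_{m ≤ n} (X (n-1) + ⋯ + X (n-m))`: the CUSUM statistic
is the running maximum of the time-reversed walk. Since `(X (n-1), …, X 0)` has the same law as
`(X 0, …, X (n-1))`, `W n` has the law of `max_{k ≤ n} S k`, which increases to `sup_k S k`;
continuity of `μ` from above gives the limit. When `E[X 0] < 0`, the strong law of large numbers
gives `S k → -∞` almost surely.
-/

open MeasureTheory ProbabilityTheory Filter Finset

theorem le_iff_forall_sum_range_reflect_le {a w : ℕ → ℝ} (h0 : w 0 = 0)
    (hsucc : ∀ n, w (n + 1) = max 0 (w n + a n)) (n : ℕ) (x : ℝ) :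
    w n ≤ x ↔ ∀ m ≤ n, ∑ i ∈ range m, a (n - 1 - i) ≤ x := by
  induction n generalizing x with
  | zero => simp [h0]
  | succ n ih =>
    have hsplit (m : ℕ) :
        ∑ i ∈ range (m + 1), a (n + 1 - 1 - i) = (∑ i ∈ range m, a (n - 1 - i)) + a n := by
      rw [sum_range_succ']
      congr 1
      exact sum_congr rfl fun i _ => congrArg a (by omega)
    rw [hsucc, max_le_iff, ← le_sub_iff_add_le, ih]
    constructor
    · rintro ⟨hx, h⟩ (_ | m) hm
      · simpa using hx
      · rw [hsplit]
        linarith [h m (by omega)]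
    · intro h
      refine ⟨by simpa using h 0 (Nat.zero_le _), fun m hm => ?_⟩
      linarith [hsplit m ▸ h (m + 1) (by omega)]

theorem Fin.sum_univ_filter_val_lt {M : Type*} [AddCommMonoid M] {m n : ℕ} (hm : m ≤ n)
    (f : ℕ → M) : ∑ i : Fin n with i.val < m, f i = ∑ i ∈ range m, f i := by
  rw [sum_filter, Fin.sum_univ_eq_sum_range (fun i => if i < m then f i else 0), ← sum_filter]
  congr 1
  ext i
  simp only [mem_filter, mem_range]
  omega

def partialSumsLe (n : ℕ) (x : ℝ) : Set (Fin n → ℝ) :=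
  {y | ∀ m ≤ n, ∑ i : Fin n with i.val < m, y i ≤ x}

theorem measurableSet_partialSumsLe (n : ℕ) (x : ℝ) : MeasurableSet (partialSumsLe n x) := by
  simp only [partialSumsLe, Set.ofPred_forall]
  exact .iInter fun m => .iInter fun _ => measurableSet_le (by fun_prop) measurable_const

theorem mk_mem_partialSumsLe_iff {n : ℕ} {x : ℝ} (g : ℕ → ℝ) :
    (fun i : Fin n => g i) ∈ partialSumsLe n x ↔ ∀ m ≤ n, ∑ i ∈ range m, g i ≤ x :=
  forall₂_congr fun _ hm => by rw [Fin.sum_univ_filter_val_lt hm]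

theorem ProbabilityTheory.iIndepFun.map_comp_injective_eq {Ω ι κ β : Type*} [MeasurableSpace Ω]
    [MeasurableSpace β] [Fintype κ] {μ : Measure Ω} [IsProbabilityMeasure μ] {X : ι → Ω → β}
    (hindep : iIndepFun X μ) (hmeas : ∀ i, AEMeasurable (X i) μ)
    (hident : ∀ i j, μ.map (X i) = μ.map (X j)) {σ τ : κ → ι} (hσ : σ.Injective)
    (hτ : τ.Injective) :
    μ.map (fun ω k => X (σ k) ω) = μ.map (fun ω k => X (τ k) ω) := by
  rw [(iIndepFun_iff_map_fun_eq_pi_map fun k => hmeas (σ k)).1 (hindep.precomp hσ),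
    (iIndepFun_iff_map_fun_eq_pi_map fun k => hmeas (τ k)).1 (hindep.precomp hτ)]
  congr 1
  funext k
  exact hident _ _

theorem measure_cusum_le_eq {Ω : Type*} [MeasurableSpace Ω] {μ : Measure Ω}
    [IsProbabilityMeasure μ] {X W : ℕ → Ω → ℝ} (hmeas : ∀ i, Measurable (X i))
    (hindep : iIndepFun X μ) (hident : ∀ i j, μ.map (X i) = μ.map (X j))
    (hW0 : ∀ ω, W 0 ω = 0) (hW : ∀ n ω, W (n + 1) ω = max 0 (W n ω + X n ω)) (n : ℕ) (x : ℝ) :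
    μ {ω | W n ω ≤ x} = μ (⋂ k ≤ n, {ω | ∑ i ∈ range k, X i ω ≤ x}) := by
  have hreversed : {ω | W n ω ≤ x} =
      (fun ω (i : Fin n) => X (n - 1 - i) ω) ⁻¹' partialSumsLe n x := by
    ext ω
    exact (le_iff_forall_sum_range_reflect_le (a := (X · ω)) (w := (W · ω)) (hW0 ω) (hW · ω) n
      x).trans (mk_mem_partialSumsLe_iff fun i => X (n - 1 - i) ω).symm
  have hforward : ⋂ k ≤ n, {ω | ∑ i ∈ range k, X i ω ≤ x} =
      (fun ω (i : Fin n) => X i ω) ⁻¹' partialSumsLe n x := by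
    ext ω
    simp only [Set.mem_iInter, Set.mem_ofPred_eq, Set.mem_preimage]
    exact (mk_mem_partialSumsLe_iff fun i => X i ω).symm
  have hreflect_inj : (fun i : Fin n => n - 1 - (i : ℕ)).Injective := fun i j h =>
    Fin.ext (by have := i.isLt; have := j.isLt; simp only at h; omega)
  rw [hreversed, hforward, ← Measure.map_apply (by fun_prop) (measurableSet_partialSumsLe n x),
    ← Measure.map_apply (by fun_prop) (measurableSet_partialSumsLe n x),
    hindep.map_comp_injective_eq (fun i => (hmeas i).aemeasurable) hident hreflect_inj
      Fin.val_injective]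

theorem tendsto_atBot_of_tendsto_div_natCast_neg {u : ℕ → ℝ} {c : ℝ} (hc : c < 0)
    (h : Tendsto (fun n => u n / n) atTop (nhds c)) : Tendsto u atTop atBot := by
  refine (tendsto_natCast_atTop_atTop.atTop_mul_neg hc h).congr' ?_
  filter_upwards [eventually_ne_atTop 0] with n hn
  field_simp

/-- The limiting distribution of the CUSUM statistic is the law of the all-time
maximum of the random walk: for every `x`, `n ↦ P(W n ≤ x)` is nonincreasing
and converges to `P(sup_{k ≥ 0} S k ≤ x)`.  If moreover the increments are
integrable with negative mean, the all-time supremum is almost surely finite,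
so `W n` converges in distribution to an almost surely finite random variable. -/
theorem cusum_limiting_distribution
    {Ω : Type*} [MeasurableSpace Ω] (μ : Measure Ω) [IsProbabilityMeasure μ]
    (X : ℕ → Ω → ℝ)
    (hmeas : ∀ i, Measurable (X i))
    (hindep : iIndepFun X μ)
    (hident : ∀ i, μ.map (X i) = μ.map (X 0))
    (S : ℕ → Ω → ℝ)
    (hS : ∀ n ω, S n ω = ∑ i ∈ Finset.range n, X i ω)
    (W : ℕ → Ω → ℝ)
    (hW0 : ∀ ω, W 0 ω = 0)
    (hW : ∀ n ω, W (n + 1) ω = max 0 (W n ω + X n ω)) :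
    (∀ x : ℝ,
      Antitone (fun n => μ {ω | W n ω ≤ x}) ∧
      Tendsto (fun n => μ {ω | W n ω ≤ x}) atTop
        (nhds (μ {ω | ∀ k, S k ω ≤ x}))) ∧
    (Integrable (X 0) μ → (∫ ω, X 0 ω ∂μ) < 0 →
      ∀ᵐ ω ∂μ, BddAbove (Set.range fun k => S k ω)) := by
  have hlaw := measure_cusum_le_eq hmeas hindep (fun i j => (hident i).trans (hident j).symm)
    hW0 hW
  refine ⟨fun x => ⟨fun m n hmn => ?_, ?_⟩, fun hint hmean => ?_⟩
  · simp only [hlaw]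
    exact measure_mono (Set.biInter_subset_biInter_left fun k hk => le_trans hk hmn)
  · simp only [hlaw, hS, Set.ofPred_forall]
    exact tendsto_measure_iInter_le
      (fun k => (measurableSet_le (by fun_prop) measurable_const).nullMeasurableSet)
      ⟨0, measure_ne_top μ _⟩
  · have hslln := strong_law_ae_real X hint (fun i j hij => hindep.indepFun hij)
      fun i => ⟨(hmeas i).aemeasurable, (hmeas 0).aemeasurable, hident i⟩
    filter_upwards [hslln] with ω hω
    simp only [hS]
    exact bddAbove_range_of_tendsto_atTop_atBot
      (tendsto_atBot_of_tendsto_div_natCast_neg hmean hω)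
end

section
/- Let m₁ > 0 and υ₊ > 0, and let ε₁, ε₂ : [0,∞) → ℝ be continuous functions with ε₁(θ) → 0 and ε₂(θ) → 0 as θ → ∞, and such that 1/m₁ + ε₁(θ) > 0 and υ₊ + ε₂(θ) > 0 for all θ ≥ 0. For κ ≥ 1 define J̄(θ, κ) = θ (1/m₁ + ε₁(θ)) + κ exp(−θ (υ₊ + ε₂(θ))) and J*(κ) = inf_{θ ≥ 0} J̄(θ, κ). Then for each κ the infimum is attained, J*(κ) = (1/(m₁ υ₊)) log κ + o(log κ) as κ → ∞, and any family (θ*(κ)) of minimizers satisfies θ*(κ) = (1/υ₊) log κ + o(log κ) as κ → ∞. -/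
/-!
Write `L = log κ` and the cost as `θ α(θ) + κ exp(-θ β(θ))` with `α → 1/m₁` and `β → υ₊`.
Testing the threshold `θ = a L` with `a υ₊ > 1` keeps the penalty term bounded, so
`J*(κ) ≤ (a/m₁ + o(1)) L`. At a minimizer `θ*` the penalty term is at most `J* = O(L)`, which
forces `θ* β(θ*) ≥ L - log L - O(1)`; hence `θ* → ∞` and `liminf θ*/L ≥ 1/υ₊`. The drift term
`θ* α(θ*) ≤ J*` gives `limsup θ*/L ≤ a` for every `a > 1/υ₊`, and `J* ≥ θ* α(θ*)` gives the
matching lower bound for `J*/L`.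
-/

open Real Filter Set Topology

lemma tendsto_nhds_of_eventually_le_of_forall_lt {ι R : Type*} [TopologicalSpace R] [LinearOrder R]
    [OrderTopology R] {l : Filter ι} {f g : ι → R} {x : R} (hg : Tendsto g l (𝓝 x))
    (hgf : g ≤ᶠ[l] f) (hf : ∀ b, x < b → ∀ᶠ i in l, f i < b) : Tendsto f l (𝓝 x) :=
  tendsto_order.2
    ⟨fun _ hb => (hg.eventually_const_lt hb).mp (hgf.mono fun _ h h' => h'.trans_le h), hf⟩

lemma tendsto_atTop_of_continuous_comp {ι : Type*} {l : Filter ι} {t : ι → ℝ} {φ : ℝ → ℝ}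
    (hφ : Continuous φ) (ht : ∀ᶠ i in l, 0 ≤ t i) (hφt : Tendsto (φ ∘ t) l atTop) :
    Tendsto t l atTop := by
  refine tendsto_atTop.2 fun M => ?_
  obtain ⟨G, hG⟩ := (isCompact_Icc (a := 0) (b := M)).bddAbove_image hφ.continuousOn
  filter_upwards [ht, hφt.eventually_gt_atTop G] with i hi₀ hiG
  by_contra! hiM
  exact hiG.not_ge (hG (mem_image_of_mem φ ⟨hi₀, hiM.le⟩))

lemma tendsto_sub_log_sub_div_self (K : ℝ) :
    Tendsto (fun x => (x - log x - K) / x) atTop (𝓝 1) := by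
  have h := ((tendsto_const_nhds (x := 1)).sub isLittleO_log_id_atTop.tendsto_div_nhds_zero).sub
    ((tendsto_const_nhds (x := K)).div_atTop tendsto_id)
  rw [sub_zero, sub_zero] at h
  refine h.congr' ?_
  filter_upwards [eventually_ne_atTop 0] with x hx
  simp only [id]
  field_simp

lemma tendsto_sub_log_sub_atTop (K : ℝ) : Tendsto (fun x => x - log x - K) atTop atTop := by
  refine (tendsto_id.atTop_mul_pos one_pos (tendsto_sub_log_sub_div_self K)).congr' ?_
  filter_upwards [eventually_ne_atTop 0] with x hx
  simp only [id]
  field_simp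

noncomputable def cusumCost (α β : ℝ → ℝ) (θ κ : ℝ) : ℝ := θ * α θ + κ * exp (-θ * β θ)

section CusumCost

variable {α β : ℝ → ℝ} {c υ : ℝ}

lemma mul_le_cusumCost {κ : ℝ} (hκ : 0 ≤ κ) (θ : ℝ) : θ * α θ ≤ cusumCost α β θ κ :=
  le_add_of_nonneg_right (by positivity)

lemma mul_exp_le_cusumCost {θ : ℝ} (hθ : 0 ≤ θ) (hα : 0 ≤ α θ) (κ : ℝ) :
    κ * exp (-θ * β θ) ≤ cusumCost α β θ κ :=
  le_add_of_nonneg_left (mul_nonneg hθ hα)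

lemma tendsto_cusumCost_atTop (hc : 0 < c) (hα : Tendsto α atTop (𝓝 c)) {κ : ℝ} (hκ : 0 ≤ κ) :
    Tendsto (cusumCost α β · κ) atTop atTop :=
  tendsto_atTop_mono (mul_le_cusumCost hκ) (tendsto_id.atTop_mul_pos hc hα)

lemma exists_isMinOn_cusumCost (hαc : Continuous α) (hβc : Continuous β) (hc : 0 < c)
    (hα : Tendsto α atTop (𝓝 c)) {κ : ℝ} (hκ : 0 ≤ κ) :
    ∃ θ₀ ∈ Ici (0 : ℝ), IsMinOn (cusumCost α β · κ) (Ici 0) θ₀ := by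
  refine (Continuous.continuousOn (by unfold cusumCost; fun_prop)).exists_isMinOn' isClosed_Ici
    self_mem_Ici ?_
  rw [cocompact_eq_atBot_atTop]
  refine eventually_inf_principal.2 (eventually_sup.2 ⟨?_, ?_⟩)
  · filter_upwards [eventually_lt_atBot 0] with θ hθ hθ₀ using absurd hθ₀ hθ.not_ge
  · filter_upwards [(tendsto_cusumCost_atTop hc hα hκ).eventually_ge_atTop (cusumCost α β 0 κ)]
      with θ hθ _ using hθ

lemma tendsto_cusumCost_mul_log_div_log (hα : Tendsto α atTop (𝓝 c)) (hβ : Tendsto β atTop (𝓝 υ))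
    {a : ℝ} (ha : 0 < a) (haυ : 1 < a * υ) :
    Tendsto (fun κ => cusumCost α β (a * log κ) κ / log κ) atTop (𝓝 (a * c)) := by
  have hθ : Tendsto (fun κ => a * log κ) atTop atTop := tendsto_log_atTop.const_mul_atTop ha
  have hpenalty : Tendsto (fun κ => exp (log κ * (1 - a * β (a * log κ)))) atTop (𝓝 0) :=
    tendsto_exp_atBot.comp <| tendsto_log_atTop.atTop_mul_neg (by linarith)
      (((hβ.comp hθ).const_mul a).const_sub 1)
  have h := ((hα.comp hθ).const_mul a).add (hpenalty.div_atTop tendsto_log_atTop)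
  rw [add_zero] at h
  refine h.congr' ?_
  filter_upwards [eventually_gt_atTop 1] with κ hκ
  have hL : log κ ≠ 0 := (log_pos hκ).ne'
  have hexp : exp (log κ * (1 - a * β (a * log κ))) = κ * exp (-(a * log κ) * β (a * log κ)) := by
    rw [show log κ * (1 - a * β (a * log κ)) = log κ + -(a * log κ) * β (a * log κ) by ring,
      exp_add, exp_log (by linarith)]
  simp only [Function.comp, cusumCost, hexp]
  field_simp

section Minimizer

variable {t : ℝ → ℝ}

lemma eventually_cusumCost_lt_mul_log (hc : 0 < c) (hυ : 0 < υ) (hα : Tendsto α atTop (𝓝 c))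
    (hβ : Tendsto β atTop (𝓝 υ))
    (ht : ∀ᶠ κ in atTop,
      t κ ∈ Ici 0 ∧ ∀ θ ∈ Ici (0 : ℝ), cusumCost α β (t κ) κ ≤ cusumCost α β θ κ)
    {b : ℝ} (hb : c / υ < b) : ∀ᶠ κ in atTop, cusumCost α β (t κ) κ < b * log κ := by
  have hbυ : c < b * υ := (div_lt_iff₀ hυ).1 hb
  have hb₀ : 0 < b := (div_pos hc hυ).trans hb
  obtain ⟨a, ha, haυ, hab⟩ : ∃ a, 0 < a ∧ 1 < a * υ ∧ a * c < b :=
    ⟨(1 / υ + b / c) / 2, by positivity, by field_simp; linarith, by field_simp; linarith⟩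
  filter_upwards [ht, (tendsto_cusumCost_mul_log_div_log hα hβ ha haυ).eventually_lt_const hab,
    eventually_gt_atTop 1] with κ ⟨_, hmin⟩ hlt hκ
  have hL := log_pos hκ
  calc cusumCost α β (t κ) κ ≤ cusumCost α β (a * log κ) κ := hmin _ (mem_Ici.2 (by positivity))
    _ < b * log κ := (div_lt_iff₀ hL).1 hlt

lemma exists_sub_log_log_le_mul (hc : 0 < c) (hυ : 0 < υ) (hα : Tendsto α atTop (𝓝 c))
    (hβ : Tendsto β atTop (𝓝 υ)) (hα₀ : ∀ θ, 0 ≤ θ → 0 ≤ α θ)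
    (ht : ∀ᶠ κ in atTop,
      t κ ∈ Ici 0 ∧ ∀ θ ∈ Ici (0 : ℝ), cusumCost α β (t κ) κ ≤ cusumCost α β θ κ) :
    ∃ K, ∀ᶠ κ in atTop, log κ - log (log κ) - K ≤ t κ * β (t κ) := by
  refine ⟨log (c / υ + 1), ?_⟩
  filter_upwards [ht, eventually_cusumCost_lt_mul_log hc hυ hα hβ ht (lt_add_one _),
    eventually_gt_atTop 1] with κ ⟨ht₀, _⟩ hlt hκ
  have hL := log_pos hκ
  have hpenalty := (mul_exp_le_cusumCost ht₀ (hα₀ _ ht₀) κ).trans_lt hlt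
  have hlog := log_lt_log (by positivity) hpenalty
  rw [log_mul (by positivity) (exp_pos _).ne', log_exp, log_mul (by positivity) hL.ne'] at hlog
  linarith

lemma tendsto_minimizer_atTop (hc : 0 < c) (hυ : 0 < υ) (hα : Tendsto α atTop (𝓝 c))
    (hβ : Tendsto β atTop (𝓝 υ)) (hβc : Continuous β) (hα₀ : ∀ θ, 0 ≤ θ → 0 ≤ α θ)
    (ht : ∀ᶠ κ in atTop,
      t κ ∈ Ici 0 ∧ ∀ θ ∈ Ici (0 : ℝ), cusumCost α β (t κ) κ ≤ cusumCost α β θ κ) :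
    Tendsto t atTop atTop := by
  obtain ⟨K, hK⟩ := exists_sub_log_log_le_mul hc hυ hα hβ hα₀ ht
  exact tendsto_atTop_of_continuous_comp (φ := fun θ => θ * β θ) (by fun_prop)
    (ht.mono fun _ h => h.1)
    (tendsto_atTop_mono' _ hK ((tendsto_sub_log_sub_atTop K).comp tendsto_log_atTop))

lemma tendsto_minimizer_div_log (hc : 0 < c) (hυ : 0 < υ) (hα : Tendsto α atTop (𝓝 c))
    (hβ : Tendsto β atTop (𝓝 υ)) (hβc : Continuous β) (hα₀ : ∀ θ, 0 ≤ θ → 0 ≤ α θ)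
    (ht : ∀ᶠ κ in atTop,
      t κ ∈ Ici 0 ∧ ∀ θ ∈ Ici (0 : ℝ), cusumCost α β (t κ) κ ≤ cusumCost α β θ κ) :
    Tendsto (fun κ => t κ / log κ) atTop (𝓝 (1 / υ)) := by
  have htop := tendsto_minimizer_atTop hc hυ hα hβ hβc hα₀ ht
  obtain ⟨K, hK⟩ := exists_sub_log_log_le_mul hc hυ hα hβ hα₀ ht
  refine tendsto_nhds_of_eventually_le_of_forall_lt
    (((tendsto_sub_log_sub_div_self K).comp tendsto_log_atTop).div (hβ.comp htop) hυ.ne') ?_ ?_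
  · filter_upwards [hK, (hβ.comp htop).eventually_const_lt hυ, eventually_gt_atTop 1]
      with κ hκK hβpos hκ
    have hL := log_pos hκ
    simp only [Pi.div_apply, Function.comp] at hβpos ⊢
    rw [div_le_iff₀ hβpos, div_mul_eq_mul_div]
    exact div_le_div_of_nonneg_right hκK hL.le
  · intro b hb
    have hbυ : 1 < b * υ := (div_lt_iff₀ hυ).1 hb
    have hb₀ : 0 < b := (one_div_pos.2 hυ).trans hb
    obtain ⟨a, ha, haυ, hab⟩ : ∃ a, 0 < a ∧ 1 < a * υ ∧ a < b :=
      ⟨(1 / υ + b) / 2, by positivity, by field_simp; linarith, by linarith⟩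
    have hupper := ((tendsto_cusumCost_mul_log_div_log hα hβ ha haυ).div (hα.comp htop) hc.ne')
    rw [mul_div_cancel_right₀ _ hc.ne'] at hupper
    filter_upwards [ht, hupper.eventually_lt_const hab, (hα.comp htop).eventually_const_lt hc,
      eventually_gt_atTop 1] with κ ⟨ht₀, hmin⟩ hlt hαpos hκ
    have hL := log_pos hκ
    simp only [Pi.div_apply, Function.comp] at hlt hαpos ⊢
    refine lt_of_le_of_lt ?_ hlt
    rw [le_div_iff₀ hαpos, div_mul_eq_mul_div]
    exact div_le_div_of_nonneg_right ((mul_le_cusumCost (by linarith) _).trans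
      (hmin _ (mem_Ici.2 (by positivity)))) hL.le

lemma tendsto_cusumCost_minimizer_div_log (hc : 0 < c) (hυ : 0 < υ) (hα : Tendsto α atTop (𝓝 c))
    (hβ : Tendsto β atTop (𝓝 υ)) (hβc : Continuous β) (hα₀ : ∀ θ, 0 ≤ θ → 0 ≤ α θ)
    (ht : ∀ᶠ κ in atTop,
      t κ ∈ Ici 0 ∧ ∀ θ ∈ Ici (0 : ℝ), cusumCost α β (t κ) κ ≤ cusumCost α β θ κ) :
    Tendsto (fun κ => cusumCost α β (t κ) κ / log κ) atTop (𝓝 (c / υ)) := by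
  have hlower := (tendsto_minimizer_div_log hc hυ hα hβ hβc hα₀ ht).mul
    (hα.comp (tendsto_minimizer_atTop hc hυ hα hβ hβc hα₀ ht))
  rw [one_div_mul_eq_div] at hlower
  refine tendsto_nhds_of_eventually_le_of_forall_lt hlower ?_ fun b hb => ?_
  · filter_upwards [eventually_gt_atTop 1] with κ hκ
    rw [Function.comp, div_mul_eq_mul_div]
    exact div_le_div_of_nonneg_right (mul_le_cusumCost (by linarith) _) (log_pos hκ).le
  · filter_upwards [eventually_cusumCost_lt_mul_log hc hυ hα hβ ht hb, eventually_gt_atTop 1]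
      with κ hlt hκ using (div_lt_iff₀ (log_pos hκ)).2 hlt

end Minimizer

end CusumCost

theorem cusum_cost_asymptotics_general
    (m₁ υp : ℝ) (hm₁ : 0 < m₁) (hυp : 0 < υp)
    (ε₁ ε₂ : ℝ → ℝ) (hε₁cont : Continuous ε₁) (hε₂cont : Continuous ε₂)
    (hε₁lim : Tendsto ε₁ atTop (nhds 0)) (hε₂lim : Tendsto ε₂ atTop (nhds 0))
    (hpos₁ : ∀ θ : ℝ, 0 ≤ θ → 0 < 1 / m₁ + ε₁ θ)
    (J : ℝ → ℝ → ℝ)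
    (hJ : ∀ θ κ, J θ κ = θ * (1 / m₁ + ε₁ θ) + κ * Real.exp (-θ * (υp + ε₂ θ)))
    (Jstar : ℝ → ℝ)
    (hJstar : ∀ κ, Jstar κ = sInf ((fun θ => J θ κ) '' Ici 0)) :
    (∀ κ : ℝ, 1 ≤ κ → ∃ θ₀ ∈ Ici (0 : ℝ), ∀ θ ∈ Ici (0 : ℝ), J θ₀ κ ≤ J θ κ) ∧
    Tendsto (fun κ => Jstar κ / Real.log κ) atTop (nhds (1 / (m₁ * υp))) ∧
    (∀ θstar : ℝ → ℝ,
      (∀ κ : ℝ, 1 ≤ κ →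
        θstar κ ∈ Ici (0 : ℝ) ∧ ∀ θ ∈ Ici (0 : ℝ), J (θstar κ) κ ≤ J θ κ) →
      Tendsto (fun κ => θstar κ / Real.log κ) atTop (nhds (1 / υp))) := by
  obtain rfl : J = cusumCost (fun θ => 1 / m₁ + ε₁ θ) (fun θ => υp + ε₂ θ) :=
    funext fun θ => funext (hJ θ)
  have hc : 0 < 1 / m₁ := by positivity
  have hα : Tendsto (fun θ => 1 / m₁ + ε₁ θ) atTop (𝓝 (1 / m₁)) := by
    simpa using tendsto_const_nhds.add hε₁lim
  have hβ : Tendsto (fun θ => υp + ε₂ θ) atTop (𝓝 υp) := by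
    simpa using tendsto_const_nhds.add hε₂lim
  have hα₀ : ∀ θ, 0 ≤ θ → 0 ≤ 1 / m₁ + ε₁ θ := fun θ hθ => (hpos₁ θ hθ).le
  have hmin (κ : ℝ) (hκ : 1 ≤ κ) : ∃ θ₀ ∈ Ici (0 : ℝ), ∀ θ ∈ Ici (0 : ℝ),
      cusumCost _ _ θ₀ κ ≤ cusumCost (fun θ => 1 / m₁ + ε₁ θ) (fun θ => υp + ε₂ θ) θ κ :=
    (exists_isMinOn_cusumCost (by fun_prop) (by fun_prop) hc hα (by linarith)).imp
      fun _ h => ⟨h.1, isMinOn_iff.1 h.2⟩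
  refine ⟨hmin, ?_, fun t ht => ?_⟩
  · choose! t ht₀ ht using hmin
    have hcost := tendsto_cusumCost_minimizer_div_log hc hυp hα hβ (by fun_prop) hα₀
      ((eventually_ge_atTop 1).mono fun κ hκ => ⟨ht₀ κ hκ, ht κ hκ⟩)
    rw [div_div] at hcost
    refine hcost.congr' ?_
    filter_upwards [eventually_ge_atTop 1] with κ hκ
    rw [hJstar, IsLeast.csInf_eq ⟨mem_image_of_mem _ (ht₀ κ hκ), forall_mem_image.2 (ht κ hκ)⟩]
  · exact tendsto_minimizer_div_log hc hυp hα hβ (by fun_prop) hα₀ ((eventually_ge_atTop 1).mono ht)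

/-- Asymptotics of the optimal CUSUM threshold and cost.  Suppose
`J̄(θ, κ) = θ(1/m₁ + ε₁(θ)) + κ exp(−θ(υ₊ + ε₂(θ)))` where `ε₁, ε₂` are
continuous and vanish at infinity, with `1/m₁ + ε₁(θ) > 0` and
`υ₊ + ε₂(θ) > 0` on `[0,∞)`.  Then for each `κ ≥ 1` the infimum of
`J̄(·, κ)` over `θ ≥ 0` is attained, the optimal cost satisfies
`J*(κ) = (1/(m₁ υ₊)) log κ + o(log κ)`, and any family of minimizers satisfies
`θ*(κ) = (1/υ₊) log κ + o(log κ)` as `κ → ∞`. -/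
theorem cusum_cost_asymptotics
    (m₁ υp : ℝ) (hm₁ : 0 < m₁) (hυp : 0 < υp)
    (ε₁ ε₂ : ℝ → ℝ) (hε₁cont : Continuous ε₁) (hε₂cont : Continuous ε₂)
    (hε₁lim : Tendsto ε₁ atTop (nhds 0)) (hε₂lim : Tendsto ε₂ atTop (nhds 0))
    (hpos₁ : ∀ θ : ℝ, 0 ≤ θ → 0 < 1 / m₁ + ε₁ θ)
    (hpos₂ : ∀ θ : ℝ, 0 ≤ θ → 0 < υp + ε₂ θ)
    (J : ℝ → ℝ → ℝ)
    (hJ : ∀ θ κ, J θ κ = θ * (1 / m₁ + ε₁ θ) + κ * Real.exp (-θ * (υp + ε₂ θ)))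
    (Jstar : ℝ → ℝ)
    (hJstar : ∀ κ, Jstar κ = sInf ((fun θ => J θ κ) '' Ici 0)) :
    (∀ κ : ℝ, 1 ≤ κ → ∃ θ₀ ∈ Ici (0 : ℝ), ∀ θ ∈ Ici (0 : ℝ), J θ₀ κ ≤ J θ κ) ∧
    Tendsto (fun κ => Jstar κ / Real.log κ) atTop (nhds (1 / (m₁ * υp))) ∧
    (∀ θstar : ℝ → ℝ,
      (∀ κ : ℝ, 1 ≤ κ →
        θstar κ ∈ Ici (0 : ℝ) ∧ ∀ θ ∈ Ici (0 : ℝ), J (θstar κ) κ ≤ J θ κ) →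
      Tendsto (fun κ => θstar κ / Real.log κ) atTop (nhds (1 / υp))) :=
  cusum_cost_asymptotics_general m₁ υp hm₁ hυp ε₁ ε₂ hε₁cont hε₂cont hε₁lim hε₂lim hpos₁ J hJ Jstar
    hJstar
end

section
/- Let Q be an m × m real matrix with nonnegative entries and all row sums at most 1 (a substochastic matrix), let ν ∈ ℝ^m be a probability vector (nonnegative entries summing to 1), and let 𝟙 ∈ ℝ^m be the all-ones vector. Define t_n = νᵀ Qⁿ 𝟙 for n ≥ 0. Assume t_n > 0 for every n, and t_n → 0 as n → ∞. Then there exists ρ ∈ (0, ∞) such that lim_{n → ∞} (1/n) log t_n = −ρ. -/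
/-!
Write `uₙ = Qⁿ 𝟙`, so that `tₙ = ν ⬝ uₙ` and `uₙ` is entrywise antitone. If a state `j` carries
mass at least `c` under `ν Qᵃ`, then `c uₙ(j) ≤ t_{a+n} ≤ tₙ`; taking `c` uniform over the finitely
many states reachable from `ν` gives `c t_{a+b} ≤ tₐ t_b`, so `log (tₙ / c)` is subadditive and
Fekete's lemma yields the limit of `log tₙ / n`. The limit is finite because the states with
`uₙ > 0` for all `n` are closed under some transition of weight at least `β > 0`, whence
`tₙ ≥ ε βⁿ`; it is negative because `tₙ → 0` eventually drops below `c`.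
-/

open Filter Matrix Finset Topology

lemma exists_pos_forall_of_forall_eventually {ι : Type*} [Finite ι] {p : ι → ℝ → Prop}
    (h : ∀ i, ∀ᶠ c in 𝓝[>] 0, p i c) : ∃ c > 0, ∀ i, p i c :=
  ((eventually_all.2 h).and self_mem_nhdsWithin).exists.imp fun _ hc => ⟨hc.2, hc.1⟩

lemma bddBelow_range_div_of_add_mul_le {g : ℕ → ℝ} {A B : ℝ} (h : ∀ n : ℕ, A + n * B ≤ g n) :
    BddBelow (Set.range fun n : ℕ => g n / n) := by
  refine ⟨min A 0 + min B 0, ?_⟩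
  rintro _ ⟨n, rfl⟩
  rcases Nat.eq_zero_or_pos n with rfl | hn
  · simp only [CharP.cast_eq_zero, div_zero]
    linarith [min_le_right A 0, min_le_right B 0]
  · have hn' : (1 : ℝ) ≤ n := by exact_mod_cast hn
    rw [le_div_iff₀ (by linarith)]
    nlinarith [h n, min_le_left A 0, min_le_right A 0, min_le_left B 0, min_le_right B 0]

lemma exists_tendsto_log_div_of_mul_le {t : ℕ → ℝ} {c ε β : ℝ} (ht : ∀ n, 0 < t n) (hc : 0 < c)
    (hmul : ∀ a b, c * t (a + b) ≤ t a * t b) (hε : 0 < ε) (hβ : 0 < β)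
    (hlow : ∀ n, ε * β ^ n ≤ t n) :
    ∃ L, (∀ n ≠ 0, L ≤ Real.log (t n / c) / n) ∧
      Tendsto (fun n : ℕ => Real.log (t n) / n) atTop (𝓝 L) := by
  set g : ℕ → ℝ := fun n => Real.log (t n / c)
  have hpos : ∀ n, 0 < t n / c := fun n => div_pos (ht n) hc
  have hsub : Subadditive g := fun a b => by
    calc g (a + b) ≤ Real.log (t a / c * (t b / c)) := by
          refine Real.log_le_log (hpos _) ?_
          rw [div_mul_div_comm, le_div_iff₀ (mul_pos hc hc), div_mul_eq_mul_div,
            div_le_iff₀ hc]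
          nlinarith [hmul a b]
      _ = g a + g b := Real.log_mul (hpos a).ne' (hpos b).ne'
  have hbdd : BddBelow (Set.range fun n : ℕ => g n / n) :=
    bddBelow_range_div_of_add_mul_le (A := Real.log (ε / c)) (B := Real.log β) fun n => by
      rw [← Real.log_pow, ← Real.log_mul (div_pos hε hc).ne' (pow_pos hβ n).ne']
      refine Real.log_le_log (by positivity) ?_
      rw [div_mul_eq_mul_div]
      exact div_le_div_of_nonneg_right (hlow n) hc.le
  refine ⟨hsub.lim, fun n hn => hsub.lim_le_div hbdd hn, ?_⟩
  have hshift : ∀ n : ℕ, g n / n + Real.log c / n = Real.log (t n) / n := fun n => by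
    rw [← add_div]
    change (Real.log (t n / c) + Real.log c) / n = _
    rw [Real.log_div (ht n).ne' hc.ne', sub_add_cancel]
  simpa only [hshift, add_zero] using
    (hsub.tendsto_lim hbdd).add (tendsto_const_div_atTop_nhds_zero_nat (Real.log c))

section DotProduct

variable {ι R : Type*} [Fintype ι]

lemma mul_le_dotProduct [Semiring R] [PartialOrder R] [IsOrderedRing R] {u v : ι → R}
    (hu : 0 ≤ u) (hv : 0 ≤ v) (i : ι) : u i * v i ≤ u ⬝ᵥ v :=
  single_le_sum (fun j _ => mul_nonneg (hu j) (hv j)) (mem_univ i)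

lemma exists_forall_pos_of_forall_dotProduct_pos [Semiring R] [LinearOrder R] [IsOrderedRing R]
    {u : ι → R} {v : ℕ → ι → R} (hu : 0 ≤ u) (hanti : Antitone v) (h : ∀ n, 0 < u ⬝ᵥ v n) :
    ∃ i, 0 < u i ∧ ∀ n, 0 < v n i := by
  by_contra! hne
  have hvanish : ∀ i, ∃ N, 0 < u i → v N i ≤ 0 := fun i => by
    by_cases hi : 0 < u i
    · exact (hne i hi).imp fun _ hN _ => hN
    · exact ⟨0, fun h => absurd h hi⟩
  choose N hN using hvanish
  have hzero : u ⬝ᵥ v (univ.sup N) ≤ 0 := sum_nonpos fun i _ => by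
    rcases (hu i).eq_or_lt with hi | hi
    · simp [← hi]
    · exact mul_nonpos_of_nonneg_of_nonpos (hu i)
        ((hanti (le_sup (mem_univ i)) i).trans (hN i hi))
  exact (h _).not_ge hzero

end DotProduct

namespace Matrix

variable {ι : Type*} [Fintype ι]

lemma mulVec_mono_of_nonneg {Q : Matrix ι ι ℝ} (hQ : ∀ i j, 0 ≤ Q i j) : Monotone (Q *ᵥ ·) :=
  fun _ _ huv i => dotProduct_le_dotProduct_of_nonneg_left huv (hQ i)

variable [DecidableEq ι] {Q : Matrix ι ι ℝ}

/-- `survival Q n i` is `Pᵢ(τ > n)` for the chain killed at rate `1 - ∑ⱼ Q i j`. -/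
def survival (Q : Matrix ι ι ℝ) (n : ℕ) : ι → ℝ := (Q ^ n) *ᵥ 1

lemma survival_zero : survival Q 0 = 1 := by
  simp [survival]

lemma survival_succ (n : ℕ) : survival Q (n + 1) = Q *ᵥ survival Q n := by
  rw [survival, survival, pow_succ', mulVec_mulVec]

lemma survival_add (a n : ℕ) : survival Q (a + n) = Q ^ a *ᵥ survival Q n := by
  rw [survival, survival, pow_add, mulVec_mulVec]

lemma survival_nonneg (hQ : ∀ i j, 0 ≤ Q i j) (n : ℕ) : 0 ≤ survival Q n := by
  simpa [survival] using
    mulVec_mono_of_nonneg (pow_apply_nonneg hQ n) (zero_le_one : (0 : ι → ℝ) ≤ 1)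

lemma survival_antitone (hQ : ∀ i j, 0 ≤ Q i j) (hrow : Q *ᵥ 1 ≤ 1) : Antitone (survival Q) :=
  antitone_nat_of_succ_le fun n => by
    rw [survival, pow_succ, ← mulVec_mulVec]
    exact mulVec_mono_of_nonneg (pow_apply_nonneg hQ n) hrow

lemma exists_pow_le_survival (hQ : ∀ i j, 0 ≤ Q i j) (hrow : Q *ᵥ 1 ≤ 1) :
    ∃ β > 0, ∀ i, (∀ n, 0 < survival Q n i) → ∀ n, β ^ n ≤ survival Q n i := by
  have hnext : ∀ i, ∀ᶠ β in 𝓝[>] 0,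
      (∀ n, 0 < survival Q n i) → ∃ j, β ≤ Q i j ∧ ∀ n, 0 < survival Q n j := fun i => by
    by_cases hi : ∀ n, 0 < survival Q n i
    · obtain ⟨j, hij, hj⟩ := exists_forall_pos_of_forall_dotProduct_pos (hQ i)
        (survival_antitone hQ hrow) fun n => by
          have := hi (n + 1)
          rw [survival_succ] at this
          exact this
      exact (eventually_nhdsWithin_of_eventually_nhds (eventually_le_nhds hij)).mono
        fun _ hβ _ => ⟨j, hβ, hj⟩
    · exact .of_forall fun _ h => absurd h hi
  obtain ⟨β, hβ, hstep⟩ := exists_pos_forall_of_forall_eventually hnext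
  refine ⟨β, hβ, fun i hi n => ?_⟩
  induction n generalizing i with
  | zero => simp [survival_zero]
  | succ n ih =>
    obtain ⟨j, hβj, hj⟩ := hstep i hi
    calc β ^ (n + 1) = β * β ^ n := pow_succ' β n
      _ ≤ Q i j * survival Q n j := mul_le_mul hβj (ih j hj) (by positivity) (hQ i j)
      _ ≤ survival Q (n + 1) i := by
          rw [survival_succ]
          exact mul_le_dotProduct (hQ i) (survival_nonneg hQ n) j

lemma exists_pos_mul_survival_add_le_mul (hQ : ∀ i j, 0 ≤ Q i j) (hrow : Q *ᵥ 1 ≤ 1) {ν : ι → ℝ}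
    (hν : 0 ≤ ν) : ∃ c > 0, ∀ a b,
      c * (ν ⬝ᵥ survival Q (a + b)) ≤ (ν ⬝ᵥ survival Q a) * (ν ⬝ᵥ survival Q b) := by
  set w : ℕ → ι → ℝ := fun a => ν ᵥ* Q ^ a
  have hw : ∀ a, 0 ≤ w a := fun a j =>
    dotProduct_nonneg_of_nonneg hν fun i => pow_apply_nonneg hQ a i j
  have ht : ∀ a n, ν ⬝ᵥ survival Q (a + n) = w a ⬝ᵥ survival Q n := fun a n => by
    rw [survival_add, dotProduct_mulVec]
  have hreach : ∀ j, ∀ᶠ c in 𝓝[>] 0, ∀ a b,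
      c * (w a j * survival Q b j) ≤ w a j * (ν ⬝ᵥ survival Q b) := fun j => by
    by_cases hj : ∃ a, 0 < w a j
    · obtain ⟨a₀, ha₀⟩ := hj
      refine (eventually_nhdsWithin_of_eventually_nhds (eventually_le_nhds ha₀)).mono
        fun c hc a b => ?_
      have hsurv : c * survival Q b j ≤ ν ⬝ᵥ survival Q b :=
        calc c * survival Q b j ≤ w a₀ j * survival Q b j :=
              mul_le_mul_of_nonneg_right hc (survival_nonneg hQ b j)
          _ ≤ ν ⬝ᵥ survival Q (a₀ + b) := by
              rw [ht]
              exact mul_le_dotProduct (hw a₀) (survival_nonneg hQ b) j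
          _ ≤ ν ⬝ᵥ survival Q b := dotProduct_le_dotProduct_of_nonneg_left
              (survival_antitone hQ hrow (Nat.le_add_left b a₀)) hν
      rw [mul_left_comm]
      exact mul_le_mul_of_nonneg_left hsurv (hw a j)
    · push Not at hj
      exact .of_forall fun c a b => by simp [le_antisymm (hj a) (hw a j)]
  obtain ⟨c, hc, hle⟩ := exists_pos_forall_of_forall_eventually hreach
  refine ⟨c, hc, fun a b => ?_⟩
  have hmass : ν ⬝ᵥ survival Q a = ∑ j, w a j := by
    simpa [survival_zero, dotProduct_one] using ht a 0
  calc c * (ν ⬝ᵥ survival Q (a + b)) = ∑ j, c * (w a j * survival Q b j) := by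
        rw [ht, dotProduct, mul_sum]
    _ ≤ ∑ j, w a j * (ν ⬝ᵥ survival Q b) := sum_le_sum fun j _ => hle j a b
    _ = (ν ⬝ᵥ survival Q a) * (ν ⬝ᵥ survival Q b) := by rw [hmass, sum_mul]

end Matrix

theorem substochastic_tail_rate_general
    (m : ℕ) (Q : Matrix (Fin m) (Fin m) ℝ)
    (hQnn : ∀ i j, 0 ≤ Q i j)
    (hQrow : ∀ i, ∑ j, Q i j ≤ 1)
    (ν : Fin m → ℝ)
    (hνnn : ∀ i, 0 ≤ ν i)
    (t : ℕ → ℝ)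
    (ht : ∀ n, t n = ν ⬝ᵥ (Q ^ n).mulVec (fun _ => 1))
    (htpos : ∀ n, 0 < t n)
    (htlim : Tendsto t atTop (nhds 0)) :
    ∃ ρ : ℝ, 0 < ρ ∧
      Tendsto (fun n : ℕ => Real.log (t n) / n) atTop (nhds (-ρ)) := by
  obtain rfl : t = fun n => ν ⬝ᵥ survival Q n := funext ht
  have hrow : Q *ᵥ 1 ≤ 1 := fun i => by simpa [mulVec, dotProduct] using hQrow i
  obtain ⟨i, hνi, hi⟩ := exists_forall_pos_of_forall_dotProduct_pos hνnn
    (survival_antitone hQnn hrow) htpos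
  obtain ⟨β, hβ, hpow⟩ := exists_pow_le_survival hQnn hrow
  have hlow : ∀ n, ν i * β ^ n ≤ ν ⬝ᵥ survival Q n := fun n =>
    (mul_le_mul_of_nonneg_left (hpow i hi n) (hνnn i)).trans
      (mul_le_dotProduct hνnn (survival_nonneg hQnn n) i)
  obtain ⟨c, hc, hmul⟩ := exists_pos_mul_survival_add_le_mul hQnn hrow hνnn
  obtain ⟨L, hLle, hL⟩ := exists_tendsto_log_div_of_mul_le htpos hc hmul hνi hβ hlow
  obtain ⟨N, hNc, hN⟩ := ((htlim.eventually (gt_mem_nhds hc)).and (eventually_ne_atTop 0)).exists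
  have hlogN : Real.log (ν ⬝ᵥ survival Q N / c) / N < 0 :=
    div_neg_of_neg_of_pos (Real.log_neg (div_pos (htpos N) hc) ((div_lt_one hc).2 hNc))
      (Nat.cast_pos.2 (Nat.pos_of_ne_zero hN))
  exact ⟨-L, by linarith [hLle N hN], by simpa using hL⟩

/-- Regular geometric tail for the absorption time of a finite-state Markov
chain.  Let `Q` be a substochastic `m × m` matrix (nonnegative entries, row
sums at most 1), `ν` a probability vector, and `t n = νᵀ Qⁿ 𝟙`.  If `t n > 0`
for every `n` and `t n → 0`, then there is a rate `ρ ∈ (0, ∞)` with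
`(1/n) log t n → −ρ`. -/
theorem substochastic_tail_rate
    (m : ℕ) (Q : Matrix (Fin m) (Fin m) ℝ)
    (hQnn : ∀ i j, 0 ≤ Q i j)
    (hQrow : ∀ i, ∑ j, Q i j ≤ 1)
    (ν : Fin m → ℝ)
    (hνnn : ∀ i, 0 ≤ ν i) (hνsum : ∑ i, ν i = 1)
    (t : ℕ → ℝ)
    (ht : ∀ n, t n = ν ⬝ᵥ (Q ^ n).mulVec (fun _ => 1))
    (htpos : ∀ n, 0 < t n)
    (htlim : Tendsto t atTop (nhds 0)) :
    ∃ ρ : ℝ, 0 < ρ ∧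
      Tendsto (fun n : ℕ => Real.log (t n) / n) atTop (nhds (-ρ)) :=
  substochastic_tail_rate_general m Q hQnn hQrow ν hνnn t ht htpos htlim
end
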